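/- arXiv:2101.03557 — 2 statements merged into one kernel-verified Lean document; each statement's English description precedes it below -/
import Mathlib

section
/- For every integer n ≥ 1 and every real number x, the improper integral defining the higher order Airy function converges: the limit as R → ∞ of (1/π)·∫_0^R cos( y^{2n+1}/(2n+1) + x·y ) dy exists in ℝ. Its value is denoted Ai_n(x). -/
/-!
Write `φ` for the phase, so `cos φ = (sin φ)' / φ'`. Integrating by parts on `[a, b]`, where `φ'`
is positive and nondecreasing, bounds `∫_a^b cos φ` by `2 / φ'(a)`: each boundary term is at most
`1 / φ'`, and the remaining integral is at most `∫_a^b φ'' / φ'^2 = 1/φ'(a) - 1/φ'(b)`.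
For the Airy phase `φ' y = y^(2n) + x` tends to infinity, so the integrals are Cauchy.
-/

open Real Filter Set Topology intervalIntegral

section OscillatoryIntegral

variable {φ φ' φ'' : ℝ → ℝ}

theorem integral_cos_eq_by_parts (hφ : ∀ y, HasDerivAt φ (φ' y) y)
    (hφ' : ∀ y, HasDerivAt φ' (φ'' y) y) (hφ'' : Continuous φ'') {a b : ℝ}
    (hne : ∀ y ∈ uIcc a b, φ' y ≠ 0) :
    ∫ y in a..b, cos (φ y) =
      sin (φ b) / φ' b - sin (φ a) / φ' a + ∫ y in a..b, sin (φ y) * (φ'' y / φ' y ^ 2) := by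
  have hφc : Continuous φ := continuous_iff_continuousAt.2 fun y => (hφ y).continuousAt
  have hφ'c : Continuous φ' := continuous_iff_continuousAt.2 fun y => (hφ' y).continuousAt
  have hrem : ContinuousOn (fun y => sin (φ y) * (φ'' y / φ' y ^ 2)) (uIcc a b) :=
    (continuous_sin.comp hφc).continuousOn.mul
      (hφ''.continuousOn.div (hφ'c.pow 2).continuousOn fun y hy => pow_ne_zero 2 (hne y hy))
  have hcos : Continuous fun y => cos (φ y) := continuous_cos.comp hφc
  have hderiv : ∀ y ∈ uIcc a b, HasDerivAt (fun y => sin (φ y) / φ' y)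
      (cos (φ y) - sin (φ y) * (φ'' y / φ' y ^ 2)) y := fun y hy =>
    (((hasDerivAt_sin _).comp y (hφ y)).div (hφ' y) (hne y hy)).congr_deriv (by
      simp only [Function.comp_apply]
      field_simp [hne y hy])
  have hftc := integral_eq_sub_of_hasDerivAt hderiv (hcos.continuousOn.sub hrem).intervalIntegrable
  rw [integral_sub (hcos.intervalIntegrable a b) hrem.intervalIntegrable] at hftc
  linarith

theorem abs_integral_cos_le (hφ : ∀ y, HasDerivAt φ (φ' y) y)
    (hφ' : ∀ y, HasDerivAt φ' (φ'' y) y) (hφ'' : Continuous φ'') {a b : ℝ} (hab : a ≤ b)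
    (ha : 0 < φ' a) (hφ''_nonneg : ∀ y ∈ Icc a b, 0 ≤ φ'' y) :
    |∫ y in a..b, cos (φ y)| ≤ 2 / φ' a := by
  have hφ'c : Continuous φ' := continuous_iff_continuousAt.2 fun y => (hφ' y).continuousAt
  have hmono : MonotoneOn φ' (Icc a b) :=
    monotoneOn_of_hasDerivWithinAt_nonneg (convex_Icc a b) hφ'c.continuousOn
      (fun y _ => (hφ' y).hasDerivWithinAt) fun y hy => hφ''_nonneg y (interior_subset hy)
  have hpos : ∀ y ∈ Icc a b, 0 < φ' y := fun y hy =>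
    ha.trans_le (hmono (left_mem_Icc.2 hab) hy hy.1)
  rw [← uIcc_of_le hab] at hpos
  have hne : ∀ y ∈ uIcc a b, φ' y ≠ 0 := fun y hy => (hpos y hy).ne'
  have hb : 0 < φ' b := hpos b right_mem_uIcc
  have hweight : ContinuousOn (fun y => φ'' y / φ' y ^ 2) (uIcc a b) :=
    hφ''.continuousOn.div (hφ'c.pow 2).continuousOn fun y hy => pow_ne_zero 2 (hne y hy)
  have hint_weight : ∫ y in a..b, φ'' y / φ' y ^ 2 = 1 / φ' a - 1 / φ' b := by
    rw [integral_eq_sub_of_hasDerivAt (f := fun y => -(φ' y)⁻¹)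
      (fun y hy => ((hφ' y).inv (hne y hy)).neg.congr_deriv (by ring))
      hweight.intervalIntegrable]
    ring
  have hrem : |∫ y in a..b, sin (φ y) * (φ'' y / φ' y ^ 2)| ≤ 1 / φ' a - 1 / φ' b := by
    rw [← hint_weight, ← Real.norm_eq_abs]
    refine norm_integral_le_of_norm_le hab (Eventually.of_forall fun y hy => ?_)
      hweight.intervalIntegrable
    have hy : y ∈ uIcc a b := uIcc_of_le hab ▸ Ioc_subset_Icc_self hy
    have hw : 0 ≤ φ'' y / φ' y ^ 2 :=
      div_nonneg (hφ''_nonneg y (uIcc_of_le hab ▸ hy)) (sq_nonneg _)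
    rw [Real.norm_eq_abs, abs_mul, abs_of_nonneg hw]
    exact mul_le_of_le_one_left hw (abs_sin_le_one _)
  have hboundary : ∀ y ∈ uIcc a b, |sin (φ y) / φ' y| ≤ 1 / φ' y := fun y hy => by
    rw [abs_div, abs_of_pos (hpos y hy)]
    exact div_le_div_of_nonneg_right (abs_sin_le_one _) (hpos y hy).le
  rw [integral_cos_eq_by_parts hφ hφ' hφ'' hne]
  calc _ ≤ |sin (φ b) / φ' b| + |sin (φ a) / φ' a|
          + |∫ y in a..b, sin (φ y) * (φ'' y / φ' y ^ 2)| :=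
        (abs_add_le _ _).trans (add_le_add_left (abs_sub _ _) _)
    _ ≤ 1 / φ' b + 1 / φ' a + (1 / φ' a - 1 / φ' b) := by
        gcongr
        · exact hboundary b right_mem_uIcc
        · exact hboundary a left_mem_uIcc
    _ = 2 / φ' a := by ring

theorem exists_tendsto_integral_cos (hφ : ∀ y, HasDerivAt φ (φ' y) y)
    (hφ' : ∀ y, HasDerivAt φ' (φ'' y) y) (hφ'' : Continuous φ'')
    (hφ''_nonneg : ∀ᶠ y in atTop, 0 ≤ φ'' y) (hφ'_top : Tendsto φ' atTop atTop) (c : ℝ) :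
    ∃ L, Tendsto (fun R => ∫ y in c..R, cos (φ y)) atTop (𝓝 L) := by
  have hcos : Continuous fun y => cos (φ y) :=
    continuous_cos.comp (continuous_iff_continuousAt.2 fun y => (hφ y).continuousAt)
  refine cauchySeq_tendsto_of_complete (Metric.cauchySeq_iff'.2 fun ε hε => ?_)
  obtain ⟨a, ha⟩ := eventually_atTop.1 hφ''_nonneg
  obtain ⟨N, hNa, hN⟩ :=
    ((eventually_ge_atTop a).and (hφ'_top.eventually_gt_atTop (2 / ε))).exists
  have hN0 : 0 < φ' N := (div_pos two_pos hε).trans hN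
  refine ⟨N, fun b hb => ?_⟩
  rw [Real.dist_eq, integral_interval_sub_left (hcos.intervalIntegrable _ _)
    (hcos.intervalIntegrable _ _)]
  calc _ ≤ 2 / φ' N := abs_integral_cos_le hφ hφ' hφ'' hb hN0 fun y hy => ha y (hNa.trans hy.1)
    _ < ε := (div_lt_iff₀ hN0).2 (by linarith [(div_lt_iff₀ hε).1 hN])

end OscillatoryIntegral

theorem hasDerivAt_airyPhase (n : ℕ) (x y : ℝ) :
    HasDerivAt (fun y : ℝ => y ^ (2*n+1) / (2*(n:ℝ)+1) + x * y) (y ^ (2*n) + x) y := by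
  have h := ((hasDerivAt_pow (2*n+1) y).div_const (2*(n:ℝ)+1)).add ((hasDerivAt_id y).const_mul x)
  refine h.congr_deriv ?_
  rw [Nat.add_sub_cancel]
  push_cast
  field_simp

/-- For every integer `n ≥ 1` and every real `x`, the improper integral
defining the higher order Airy function converges: the limit as `R → ∞` of
`(1/π) ∫_0^R cos( y^(2n+1)/(2n+1) + x·y ) dy` exists in `ℝ`. -/
theorem higher_airy_integral_converges (n : ℕ) (hn : 1 ≤ n) (x : ℝ) :
    ∃ L : ℝ,
      Filter.Tendsto
        (fun R : ℝ =>
          (1 / Real.pi) * ∫ y in (0:ℝ)..R, Real.cos (y ^ (2*n+1) / (2*(n:ℝ)+1) + x * y))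
        Filter.atTop (nhds L) := by
  have hφ'_top : Tendsto (fun y : ℝ => y ^ (2*n) + x) atTop atTop :=
    tendsto_atTop_add_const_right _ x (tendsto_pow_atTop (by omega))
  obtain ⟨L, hL⟩ := exists_tendsto_integral_cos (hasDerivAt_airyPhase n x)
    (fun y => (hasDerivAt_pow (2*n) y).add_const x) (by fun_prop)
    ((eventually_ge_atTop 0).mono fun y hy => by positivity) hφ'_top 0
  exact ⟨1 / π * L, hL.const_mul _⟩
end

section
/- Let w be a weight function, t ∈ ℝ and n ≥ 1 an integer. Then for all x, y ∈ (0, ∞) the kernel K_{t,n} admits the representation K_{t,n}(x,y) = ∫_ℝ ( ∫_0^∞ Ai_n(x+z+s+t)·Ai_n(z+y+s+t) ds )·w'(z) dz, where the inner integral converges absolutely for every z ∈ ℝ and the outer integral converges absolutely. -/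
open MeasureTheory

/-- The higher order Airy function `Ai_n(x) = (1/π) lim_{R→∞} ∫_0^R cos(y^(2n+1)/(2n+1)+x·y) dy`. -/
noncomputable def Ain (n : ℕ) (x : ℝ) : ℝ :=
  Filter.limUnder Filter.atTop
    (fun R : ℝ => (1 / Real.pi) * ∫ y in (0:ℝ)..R, Real.cos (y ^ (2*n+1) / (2*(n:ℝ)+1) + x * y))

/-- The higher order finite temperature Airy kernel
`K_{t,n}(x,y) = ∫_ℝ Ai_n(x+z+t)·Ai_n(z+y+t)·w(z) dz`. -/
noncomputable def Kker (w : ℝ → ℝ) (t : ℝ) (n : ℕ) (x y : ℝ) : ℝ :=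
  ∫ z : ℝ, Ain n (x+z+t) * Ain n (z+y+t) * w z

/-!
Write `w u = ∫_{z < u} w' z dz` and exchange the order of integration: `K_{t,n}(x, y)` becomes
`∫ (∫_{u > z} Ai_n(x+u+t) Ai_n(u+y+t) du) w'(z) dz`, and `u = z + s` gives the representation.
Fubini applies because `|Ai_n v| ≤ |v| + 3` everywhere while `|Ai_n v| ≤ 2 / v` for `v > 0`
(van der Corput's lemma for the phase `y ^ (2n+1) / (2n+1) + v y`, whose derivative increases
on `y ≥ 0`), so the inner integral is absolutely convergent and `O((1 + |z|) ^ 3)`, which the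
exponential decay of `w'` makes integrable.
-/

open Filter Set Real

section VanDerCorput

variable {f f' f'' : ℝ → ℝ} {a b : ℝ}

theorem intervalIntegrable_deriv_inv (hab : a ≤ b)
    (hf' : ∀ y ∈ Icc a b, HasDerivAt f' (f'' y) y)
    (hf''_cont : ContinuousOn f'' (Icc a b)) (hne : ∀ y ∈ Icc a b, f' y ≠ 0) :
    IntervalIntegrable (fun y => -f'' y / f' y ^ 2) volume a b :=
  (hf''_cont.neg.div (ContinuousOn.pow (fun y hy => (hf' y hy).continuousAt.continuousWithinAt) 2)
    fun y hy => pow_ne_zero 2 (hne y hy)).intervalIntegrable_of_Icc hab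

/-- Integration by parts of `cos f = (1 / f') * (sin f)'`. -/
theorem integral_cos_eq_of_deriv_ne_zero (hab : a ≤ b)
    (hf : ∀ y ∈ Icc a b, HasDerivAt f (f' y) y)
    (hf' : ∀ y ∈ Icc a b, HasDerivAt f' (f'' y) y)
    (hf''_cont : ContinuousOn f'' (Icc a b)) (hne : ∀ y ∈ Icc a b, f' y ≠ 0) :
    ∫ y in a..b, cos (f y) = (f' b)⁻¹ * sin (f b) - (f' a)⁻¹ * sin (f a)
      - ∫ y in a..b, -f'' y / f' y ^ 2 * sin (f y) := by
  have hv_int : IntervalIntegrable (fun y => cos (f y) * f' y) volume a b :=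
    ((continuous_cos.comp_continuousOn fun y hy => (hf y hy).continuousAt.continuousWithinAt).mul
      fun y hy => (hf' y hy).continuousAt.continuousWithinAt).intervalIntegrable_of_Icc hab
  have hcos : ∫ y in a..b, cos (f y) = ∫ y in a..b, (f' y)⁻¹ * (cos (f y) * f' y) :=
    intervalIntegral.integral_congr fun y hy => by
      rw [uIcc_of_le hab] at hy
      field_simp [hne y hy]
  rw [hcos]
  exact intervalIntegral.integral_mul_deriv_eq_deriv_mul
    (by rw [uIcc_of_le hab]; exact fun y hy => (hf' y hy).inv (hne y hy))
    (by rw [uIcc_of_le hab]; exact fun y hy => (hf y hy).sin)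
    (intervalIntegrable_deriv_inv hab hf' hf''_cont hne) hv_int

/-- Van der Corput's lemma (first derivative test). -/
theorem abs_integral_cos_le_of_deriv_monotone (hab : a ≤ b)
    (hf : ∀ y ∈ Icc a b, HasDerivAt f (f' y) y)
    (hf' : ∀ y ∈ Icc a b, HasDerivAt f' (f'' y) y)
    (hf''_cont : ContinuousOn f'' (Icc a b)) (hf''_nonneg : ∀ y ∈ Icc a b, 0 ≤ f'' y)
    (hpos : 0 < f' a) :
    |∫ y in a..b, cos (f y)| ≤ 2 / f' a := by
  have hmono : MonotoneOn f' (Icc a b) :=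
    monotoneOn_of_hasDerivWithinAt_nonneg (convex_Icc a b)
      (fun y hy => (hf' y hy).continuousAt.continuousWithinAt)
      (fun y hy => (hf' y (interior_subset hy)).hasDerivWithinAt)
      (fun y hy => hf''_nonneg y (interior_subset hy))
  have hf'_pos : ∀ y ∈ Icc a b, 0 < f' y :=
    fun y hy => hpos.trans_le (hmono (left_mem_Icc.2 hab) hy hy.1)
  have hne : ∀ y ∈ Icc a b, f' y ≠ 0 := fun y hy => (hf'_pos y hy).ne'
  have hu_int := intervalIntegrable_deriv_inv hab hf' hf''_cont hne
  have hftc : ∫ y in a..b, f'' y / f' y ^ 2 = (f' a)⁻¹ - (f' b)⁻¹ := by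
    have := intervalIntegral.integral_eq_sub_of_hasDerivAt (f := fun y => (f' y)⁻¹)
      (by rw [uIcc_of_le hab]; exact fun y hy => (hf' y hy).inv (hne y hy)) hu_int
    simp only [neg_div, intervalIntegral.integral_neg] at this
    linarith
  have hrem : |∫ y in a..b, -f'' y / f' y ^ 2 * sin (f y)| ≤ (f' a)⁻¹ - (f' b)⁻¹ := by
    rw [← hftc, ← Real.norm_eq_abs]
    refine intervalIntegral.norm_integral_le_of_norm_le hab (ae_of_all _ fun y hy => ?_)
      (by simpa [neg_div, Pi.neg_def] using hu_int.neg)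
    have hq : 0 ≤ f'' y / f' y ^ 2 :=
      div_nonneg (hf''_nonneg y (Ioc_subset_Icc_self hy)) (sq_nonneg _)
    rw [Real.norm_eq_abs, abs_mul, neg_div, abs_neg, abs_of_nonneg hq]
    exact mul_le_of_le_one_right hq (abs_sin_le_one _)
  have hend : ∀ y ∈ Icc a b, |(f' y)⁻¹ * sin (f y)| ≤ (f' y)⁻¹ := fun y hy => by
    rw [abs_mul, abs_inv, abs_of_pos (hf'_pos y hy)]
    exact mul_le_of_le_one_right (inv_nonneg.2 (hf'_pos y hy).le) (abs_sin_le_one _)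
  have ha := hend a (left_mem_Icc.2 hab)
  have hb := hend b (right_mem_Icc.2 hab)
  rw [integral_cos_eq_of_deriv_ne_zero hab hf hf' hf''_cont hne, div_eq_mul_inv]
  have h₁ := abs_sub ((f' b)⁻¹ * sin (f b) - (f' a)⁻¹ * sin (f a))
    (∫ y in a..b, -f'' y / f' y ^ 2 * sin (f y))
  have h₂ := abs_sub ((f' b)⁻¹ * sin (f b)) ((f' a)⁻¹ * sin (f a))
  linarith

end VanDerCorput

theorem exists_tendsto_of_abs_sub_le_div {F : ℝ → ℝ} {c₀ K : ℝ}
    (h : ∀ c b, c₀ ≤ c → c ≤ b → |F b - F c| ≤ K / c) :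
    ∃ l, Tendsto F atTop (nhds l) := by
  refine cauchySeq_tendsto_of_complete (Metric.cauchySeq_iff'.2 fun ε hε => ?_)
  refine ⟨max c₀ (2 * |K| / ε + 1), fun b hb => ?_⟩
  set N := max c₀ (2 * |K| / ε + 1)
  have hN : 2 * |K| / ε + 1 ≤ N := le_max_right _ _
  have hN₀ : 0 < N := lt_of_lt_of_le (by positivity) hN
  rw [Real.dist_eq]
  calc |F b - F N| ≤ K / N := h N b (le_max_left _ _) hb
    _ ≤ |K| / N := by gcongr; exact le_abs_self K
    _ < ε := by
      rw [div_lt_iff₀ hN₀]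
      have : 2 * |K| + ε ≤ ε * N := by
        rw [div_add_one hε.ne', div_le_iff₀ hε] at hN; linarith
      linarith [abs_nonneg K]

namespace Airy

variable {n : ℕ}

noncomputable def phase (n : ℕ) (x y : ℝ) : ℝ := y ^ (2*n+1) / (2*(n:ℝ)+1) + x * y

noncomputable def partialIntegral (n : ℕ) (x R : ℝ) : ℝ :=
  ∫ y in (0:ℝ)..R, cos (phase n x y)

theorem hasDerivAt_phase (n : ℕ) (x y : ℝ) : HasDerivAt (phase n x) (y ^ (2*n) + x) y := by
  have h := ((hasDerivAt_pow (2*n+1) y).div_const (2*(n:ℝ)+1)).add ((hasDerivAt_id y).const_mul x)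
  refine h.congr_deriv ?_
  push_cast
  field_simp

theorem abs_integral_cos_phase_le (x : ℝ) {a b : ℝ} (ha : 0 ≤ a) (hab : a ≤ b)
    (hpos : 0 < a ^ (2*n) + x) :
    |∫ y in a..b, cos (phase n x y)| ≤ 2 / (a ^ (2*n) + x) :=
  abs_integral_cos_le_of_deriv_monotone hab (fun y _ => hasDerivAt_phase n x y)
    (fun y _ => (hasDerivAt_pow (2*n) y).add_const x) (by fun_prop)
    (fun y hy => mul_nonneg (Nat.cast_nonneg _) (pow_nonneg (ha.trans hy.1) _)) hpos

theorem abs_partialIntegral_sub_le (hn : 1 ≤ n) (x : ℝ) {c b : ℝ} (hc : 1 + |x| ≤ c)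
    (hcb : c ≤ b) : |partialIntegral n x b - partialIntegral n x c| ≤ 2 / c := by
  have hc₀ : 0 < c := lt_of_lt_of_le (by positivity) hc
  -- `c ≤ c ^ 2 - |x| ≤ c ^ (2n) + x` as `c ≥ 1 + |x|`
  have hc_le : c ≤ c ^ (2*n) + x := by
    have : c ^ 2 ≤ c ^ (2*n) := pow_le_pow_right₀ (by linarith [abs_nonneg x]) (by omega)
    nlinarith [neg_abs_le x, abs_nonneg x]
  have hcont : ∀ r, IntervalIntegrable (fun y => cos (phase n x y)) volume 0 r := fun r =>
    (continuous_cos.comp (by unfold phase; fun_prop)).intervalIntegrable _ _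
  rw [partialIntegral, partialIntegral,
    intervalIntegral.integral_interval_sub_left (hcont b) (hcont c)]
  exact (abs_integral_cos_phase_le x hc₀.le hcb (hc₀.trans_le hc_le)).trans
    (div_le_div_of_nonneg_left zero_le_two hc₀ hc_le)

theorem tendsto_Ain (hn : 1 ≤ n) (x : ℝ) :
    Tendsto (fun R => (1 / π) * partialIntegral n x R) atTop (nhds (Ain n x)) := by
  obtain ⟨l, hl⟩ := exists_tendsto_of_abs_sub_le_div fun _ _ hc hcb =>
    abs_partialIntegral_sub_le hn x hc hcb
  exact tendsto_nhds_limUnder ⟨_, hl.const_mul _⟩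

theorem abs_Ain_le_of_abs_partialIntegral_le (hn : 1 ≤ n) {x C R₀ : ℝ}
    (h : ∀ R, R₀ ≤ R → |partialIntegral n x R| ≤ C) : |Ain n x| ≤ C := by
  refine le_of_tendsto (tendsto_Ain hn x).abs (eventually_atTop.2 ⟨R₀, fun R hR => ?_⟩)
  rw [abs_mul, abs_of_pos (by positivity : 0 < 1 / π)]
  have hπ : 1 / π ≤ 1 := (div_le_one pi_pos).2 (by linarith [pi_gt_three])
  have hC : 0 ≤ C := (abs_nonneg _).trans (h R hR)
  nlinarith [abs_nonneg (partialIntegral n x R), h R hR]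

theorem abs_Ain_le_of_pos (hn : 1 ≤ n) {x : ℝ} (hx : 0 < x) : |Ain n x| ≤ 2 / x := by
  refine abs_Ain_le_of_abs_partialIntegral_le hn (R₀ := 0) fun R hR => ?_
  have h₀ : (0:ℝ) ^ (2*n) + x = x := by rw [zero_pow (by omega), zero_add]
  simpa only [partialIntegral, h₀] using
    abs_integral_cos_phase_le (n := n) x le_rfl hR (by rwa [h₀])

theorem abs_Ain_le (hn : 1 ≤ n) (x : ℝ) : |Ain n x| ≤ |x| + 3 := by
  set c := 1 + |x|
  refine abs_Ain_le_of_abs_partialIntegral_le hn (R₀ := c) fun R hR => ?_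
  have hc : 1 ≤ c := by simp [c]
  have h₀ : |partialIntegral n x c| ≤ c := by
    simpa [partialIntegral, abs_of_nonneg (zero_le_one.trans hc)] using
      intervalIntegral.norm_integral_le_of_norm_le_const (C := 1) (a := 0) (b := c)
        (f := fun y => cos (phase n x y)) fun y _ => by simpa using abs_cos_le_one (phase n x y)
  have h₁ := abs_partialIntegral_sub_le hn x le_rfl hR
  have h₂ : 2 / c ≤ 2 := div_le_self zero_le_two hc
  have h₃ := abs_sub_abs_le_abs_sub (partialIntegral n x R) (partialIntegral n x c)
  linarith

theorem measurable_Ain (hn : 1 ≤ n) : Measurable (Ain n) := by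
  refine measurable_of_tendsto_metrizable (f := fun (k : ℕ) x => (1 / π) * partialIntegral n x k)
    (fun k => ?_) (tendsto_pi_nhds.2 fun x => (tendsto_Ain hn x).comp tendsto_natCast_atTop_atTop)
  refine (continuous_const.mul ?_).measurable
  have hcont : Continuous (Function.uncurry fun x y => cos (phase n x y)) := by
    unfold phase; fun_prop
  exact intervalIntegral.continuous_parametric_intervalIntegral_of_continuous' hcont 0 k

theorem abs_Ain_add_le (hn : 1 ≤ n) (c u : ℝ) : |Ain n (c + u)| ≤ (|c| + 3) * (1 + |u|) := by
  nlinarith [abs_Ain_le hn (c + u), abs_add_le c u, abs_nonneg c, abs_nonneg u]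

theorem abs_Ain_add_le_of_le (hn : 1 ≤ n) {c u : ℝ} (hu : 1 + 2 * |c| ≤ u) :
    |Ain n (c + u)| ≤ 4 / u := by
  have hcu : u / 2 ≤ c + u := by linarith [neg_abs_le c, abs_nonneg c]
  have hu₀ : 0 < u / 2 := by linarith [abs_nonneg c]
  calc |Ain n (c + u)| ≤ 2 / (c + u) := abs_Ain_le_of_pos hn (hu₀.trans_le hcu)
    _ ≤ 2 / (u / 2) := by gcongr
    _ = 4 / u := by field_simp; norm_num

theorem abs_Ain_add_mul_Ain_add_le (hn : 1 ≤ n) (a b u : ℝ) :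
    |Ain n (a + u) * Ain n (b + u)| ≤ (|a| + 3) * (|b| + 3) * (1 + |u|) ^ 2 := by
  rw [abs_mul]
  calc _ ≤ (|a| + 3) * (1 + |u|) * ((|b| + 3) * (1 + |u|)) :=
        mul_le_mul (abs_Ain_add_le hn a u) (abs_Ain_add_le hn b u) (abs_nonneg _) (by positivity)
    _ = _ := by ring

theorem measurable_Ain_add_mul_Ain_add (hn : 1 ≤ n) (a b : ℝ) :
    Measurable fun u => Ain n (a + u) * Ain n (b + u) :=
  ((measurable_Ain hn).comp (measurable_const_add a)).mul
    ((measurable_Ain hn).comp (measurable_const_add b))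

theorem integrableOn_Ioi_Ain_add_mul_Ain_add (hn : 1 ≤ n) (a b : ℝ) :
    IntegrableOn (fun u => Ain n (a + u) * Ain n (b + u)) (Ioi (1 + 2 * |a| + 2 * |b|)) := by
  refine Integrable.mono' ((integrableOn_Ioi_rpow_of_lt (by norm_num : (-2:ℝ) < -1)
    (by positivity : (0:ℝ) < 1 + 2 * |a| + 2 * |b|)).const_mul 16)
    (measurable_Ain_add_mul_Ain_add hn a b).aestronglyMeasurable
    ((ae_restrict_iff' measurableSet_Ioi).2 (ae_of_all _ fun u (hu : _ < u) => ?_))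
  have hu₀ : 0 < u := lt_trans (by positivity) hu
  rw [norm_eq_abs, abs_mul, rpow_neg hu₀.le, rpow_two]
  calc _ ≤ 4 / u * (4 / u) :=
        mul_le_mul (abs_Ain_add_le_of_le hn (by linarith [abs_nonneg b]))
          (abs_Ain_add_le_of_le hn (by linarith [abs_nonneg a])) (abs_nonneg _) (by positivity)
    _ = _ := by field_simp; norm_num

end Airy

section PolynomialGrowth

theorem Ioi_subset_Ioc_min_union_Ioi (z r : ℝ) : Ioi z ⊆ Ioc (min z r) r ∪ Ioi r :=
  fun u hu => by
  by_cases h : u ≤ r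
  · exact Or.inl ⟨min_lt_of_left_lt hu, h⟩
  · exact Or.inr (not_le.1 h)

variable {f : ℝ → ℝ} {A r : ℝ} {k : ℕ}

theorem integrableOn_Ioc_of_abs_le_pow (hf : Measurable f)
    (hbound : ∀ u, |f u| ≤ A * (1 + |u|) ^ k) (a b : ℝ) : IntegrableOn f (Ioc a b) :=
  Integrable.mono' (by fun_prop : Continuous fun u => A * (1 + |u|) ^ k).integrableOn_Ioc
    hf.aestronglyMeasurable (ae_of_all _ hbound)

theorem integrableOn_Ioi_of_abs_le_pow (hf : Measurable f)
    (hbound : ∀ u, |f u| ≤ A * (1 + |u|) ^ k) (hr : IntegrableOn f (Ioi r)) (z : ℝ) :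
    IntegrableOn f (Ioi z) :=
  ((integrableOn_Ioc_of_abs_le_pow hf hbound (min z r) r).union hr).mono_set
    (Ioi_subset_Ioc_min_union_Ioi z r)

theorem integral_Ioc_min_abs_le (hbound : ∀ u, |f u| ≤ A * (1 + |u|) ^ k) (z r : ℝ) :
    ∫ u in Ioc (min z r) r, |f u| ≤ A * (1 + |z| + |r|) ^ (k + 1) := by
  have hA : 0 ≤ A := by simpa using (abs_nonneg _).trans (hbound 0)
  have hlen : r - min z r ≤ |z| + |r| := by
    rcases min_choice z r with h | h <;> rw [h] <;>
      linarith [le_abs_self r, neg_abs_le z, abs_nonneg z, abs_nonneg r]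
  have hmin : -(|z| + |r|) ≤ min z r :=
    le_min (by linarith [neg_abs_le z, abs_nonneg r]) (by linarith [neg_abs_le r, abs_nonneg z])
  have hpt : ∀ u ∈ Ioc (min z r) r, ‖|f u|‖ ≤ A * (1 + |z| + |r|) ^ k := fun u hu => by
    have hu' : |u| ≤ |z| + |r| := abs_le.2
      ⟨by linarith [hu.1], by linarith [hu.2, le_abs_self r, abs_nonneg z]⟩
    rw [norm_abs_eq_norm, norm_eq_abs]
    exact (hbound u).trans
      (mul_le_mul_of_nonneg_left (pow_le_pow_left₀ (by positivity) (by linarith) k) hA)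
  have h := norm_setIntegral_le_of_norm_le_const (μ := volume) measure_Ioc_lt_top hpt
  rw [Real.volume_real_Ioc_of_le (min_le_right z r), norm_eq_abs] at h
  calc _ ≤ A * (1 + |z| + |r|) ^ k * (r - min z r) := (le_abs_self _).trans h
    _ ≤ A * (1 + |z| + |r|) ^ k * (1 + |z| + |r|) := by gcongr; linarith
    _ = _ := by ring

theorem exists_integral_Ioi_abs_le (hf : Measurable f) (hbound : ∀ u, |f u| ≤ A * (1 + |u|) ^ k)
    (hr : IntegrableOn f (Ioi r)) :
    ∃ C, ∀ z, ∫ u in Ioi z, |f u| ≤ C * (1 + |z|) ^ (k + 1) := by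
  have hA : 0 ≤ A := by simpa using (abs_nonneg _).trans (hbound 0)
  set I := ∫ u in Ioi r, |f u|
  have hI : 0 ≤ I := setIntegral_nonneg measurableSet_Ioi fun u _ => abs_nonneg _
  refine ⟨A * (1 + |r|) ^ (k + 1) + I, fun z => ?_⟩
  have hIoc : IntegrableOn (fun u => |f u|) (Ioc (min z r) r) :=
    (integrableOn_Ioc_of_abs_le_pow hf hbound _ r).abs
  have hz : 1 ≤ (1 + |z|) ^ (k + 1) := one_le_pow₀ (by linarith [abs_nonneg z])
  calc ∫ u in Ioi z, |f u| ≤ ∫ u in Ioc (min z r) r ∪ Ioi r, |f u| :=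
        setIntegral_mono_set (hIoc.union hr.abs) (ae_of_all _ fun u => abs_nonneg _)
          (ae_of_all _ (Ioi_subset_Ioc_min_union_Ioi z r))
    _ = (∫ u in Ioc (min z r) r, |f u|) + I :=
        setIntegral_union (Ioc_disjoint_Ioi le_rfl) measurableSet_Ioi hIoc hr.abs
    _ ≤ A * ((1 + |r|) ^ (k + 1) * (1 + |z|) ^ (k + 1)) + I := by
        gcongr
        refine (integral_Ioc_min_abs_le hbound z r).trans ?_
        rw [← mul_pow]
        gcongr
        nlinarith [abs_nonneg z, abs_nonneg r]
    _ ≤ (A * (1 + |r|) ^ (k + 1) + I) * (1 + |z|) ^ (k + 1) := by nlinarith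

end PolynomialGrowth

theorem one_add_le_mul_exp {c v : ℝ} (hc : 0 < c) (hv : 0 ≤ v) :
    1 + v ≤ (1 + c⁻¹) * exp (c * v) := by
  have h : 1 + v ≤ (1 + c⁻¹) * (1 + c * v) := by
    have : c⁻¹ * (c * v) = v := by field_simp
    nlinarith [inv_pos.2 hc]
  refine h.trans (mul_le_mul_of_nonneg_left ?_ (by positivity))
  linarith [add_one_le_exp (c * v)]

theorem one_add_pow_mul_exp_neg_le (k : ℕ) {ω v : ℝ} (hω : 0 < ω) (hv : 0 ≤ v) :
    (1 + v) ^ k * exp (-ω * v) ≤ (1 + 2 * (k + 1) / ω) ^ k * exp (-(ω / 2) * v) := by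
  set c := ω / (2 * (k + 1))
  have hc : 0 < c := by positivity
  have hkc : k * c ≤ ω / 2 := by
    rw [show (k : ℝ) * c = ω / 2 * (k / (k + 1)) by simp only [c]; field_simp]
    exact mul_le_of_le_one_right (by positivity) ((div_le_one (by positivity)).2 (by linarith))
  have hpow : (1 + v) ^ k ≤ (1 + c⁻¹) ^ k * exp (k * c * v) := by
    rw [mul_assoc, exp_nat_mul, ← mul_pow]
    exact pow_le_pow_left₀ (by linarith) (one_add_le_mul_exp hc hv) k
  have hinv : c⁻¹ = 2 * (k + 1) / ω := by simp [c]
  rw [← hinv]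
  calc _ ≤ (1 + c⁻¹) ^ k * exp (k * c * v) * exp (-ω * v) := by gcongr
    _ = (1 + c⁻¹) ^ k * exp ((k * c - ω) * v) := by rw [mul_assoc, ← exp_add]; ring_nf
    _ ≤ _ := by gcongr; nlinarith

theorem integrable_exp_neg_mul_abs {c : ℝ} (hc : 0 < c) : Integrable fun z => exp (-c * |z|) := by
  rw [← integrableOn_univ, ← Iic_union_Ioi (a := 0)]
  refine IntegrableOn.union ((integrableOn_exp_mul_Iic hc 0).congr_fun (fun z hz => ?_)
    measurableSet_Iic) ((integrableOn_exp_mul_Ioi (neg_lt_zero.2 hc) 0).congr_fun (fun z hz => ?_)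
    measurableSet_Ioi)
  · rw [abs_of_nonpos hz]; ring_nf
  · rw [abs_of_pos hz]

section Weight

variable {w : ℝ → ℝ}

theorem integrable_one_add_abs_pow_mul_deriv (hw_diff : Differentiable ℝ w)
    (hw'_nonneg : ∀ x, 0 ≤ deriv w x) {ω x₀ : ℝ} (hω : 0 < ω)
    (hdecay : ∀ x, x₀ ≤ |x| → deriv w x ≤ exp (-ω * |x|)) (k : ℕ) :
    Integrable fun z => (1 + |z|) ^ k * deriv w z := by
  set M := (1 + 2 * (k + 1) / ω) ^ k
  have hcore : IntegrableOn (deriv w) (Icc (-x₀) x₀) :=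
    (integrableOn_Icc_iff_integrableOn_Ioc (by finiteness)).2 <|
      intervalIntegral.integrableOn_deriv_of_nonneg hw_diff.continuous.continuousOn
        (fun x _ => (hw_diff x).hasDerivAt) fun x _ => hw'_nonneg x
  -- the core `[-x₀, x₀]` and the exponentially small tails
  have hdom : Integrable fun z =>
      (1 + |x₀|) ^ k * (Icc (-x₀) x₀).indicator (deriv w) z + M * exp (-(ω / 2) * |z|) :=
    (((integrable_indicator_iff measurableSet_Icc).2 hcore).const_mul _).add
      ((integrable_exp_neg_mul_abs (half_pos hω)).const_mul M)
  refine hdom.mono' (by fun_prop) (ae_of_all _ fun z => ?_)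
  have hpos : 0 ≤ (1 + |z|) ^ k * deriv w z := mul_nonneg (by positivity) (hw'_nonneg z)
  rw [norm_eq_abs, abs_of_nonneg hpos]
  by_cases hz : |z| ≤ x₀
  · have hmem : z ∈ Icc (-x₀) x₀ := abs_le.1 hz
    rw [indicator_of_mem hmem]
    have : (1 + |z|) ^ k * deriv w z ≤ (1 + |x₀|) ^ k * deriv w z :=
      mul_le_mul_of_nonneg_right (pow_le_pow_left₀ (by positivity)
        (by linarith [le_abs_self x₀]) k) (hw'_nonneg z)
    linarith [(by positivity : 0 ≤ M * exp (-(ω / 2) * |z|))]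
  · calc (1 + |z|) ^ k * deriv w z ≤ (1 + |z|) ^ k * exp (-ω * |z|) := by
          gcongr; exact hdecay z (not_le.1 hz).le
      _ ≤ M * exp (-(ω / 2) * |z|) := one_add_pow_mul_exp_neg_le k hω (abs_nonneg z)
      _ ≤ _ := le_add_of_nonneg_left
          (mul_nonneg (by positivity) (indicator_nonneg (fun x _ => hw'_nonneg x) z))

theorem integral_Iio_deriv (hw_diff : Differentiable ℝ w) (hw_int : Integrable (deriv w))
    (hw_bot : Tendsto w atBot (nhds 0)) (u : ℝ) : ∫ z in Iio u, deriv w z = w u := by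
  rw [← integral_Iic_eq_integral_Iio, integral_Iic_of_hasDerivAt_of_tendsto'
    (fun z _ => (hw_diff z).hasDerivAt) hw_int.integrableOn hw_bot, sub_zero]

end Weight

theorem integral_Ioi_zero_comp_add {E : Type*} [NormedAddCommGroup E] [NormedSpace ℝ E]
    (f : ℝ → E) (z : ℝ) : ∫ s in Ioi 0, f (z + s) = ∫ u in Ioi z, f u := by
  have h := (measurePreserving_add_left volume z).setIntegral_preimage_emb
    (measurableEmbedding_addLeft z) f (Ioi z)
  rwa [preimage_const_add_Ioi, sub_self] at h

theorem integrableOn_Ioi_zero_comp_add {E : Type*} [NormedAddCommGroup E] {f : ℝ → E} {z : ℝ}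
    (hf : IntegrableOn f (Ioi z)) : IntegrableOn (fun s => f (z + s)) (Ioi 0) := by
  have h := ((measurePreserving_add_left volume z).integrableOn_comp_preimage
    (measurableEmbedding_addLeft z)).2 hf
  rwa [preimage_const_add_Ioi, sub_self] at h

section Fubini

variable {f g P : ℝ → ℝ}

theorem measurable_indicator_Ioi_fst (hf : Measurable f) :
    Measurable fun p : ℝ × ℝ => (Ioi p.1).indicator f p.2 :=
  (hf.comp measurable_snd).indicator (measurableSet_lt measurable_fst measurable_snd)

theorem integral_indicator_Ioi_mul (f : ℝ → ℝ) (c z : ℝ) :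
    ∫ u, (Ioi z).indicator f u * c = (∫ u in Ioi z, f u) * c := by
  rw [integral_mul_const, integral_indicator measurableSet_Ioi]

theorem integrable_indicator_Ioi_fst_mul (hf : Measurable f) (hg : Measurable g)
    (hg_nonneg : ∀ z, 0 ≤ g z) (hf_int : ∀ z, IntegrableOn f (Ioi z))
    (hP : ∀ z, ∫ u in Ioi z, |f u| ≤ P z)
    (hPg : Integrable fun z => P z * g z) :
    Integrable (fun p : ℝ × ℝ => (Ioi p.1).indicator f p.2 * g p.1) (volume.prod volume) := by
  have hG : Measurable fun p : ℝ × ℝ => (Ioi p.1).indicator f p.2 * g p.1 :=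
    (measurable_indicator_Ioi_fst hf).mul (hg.comp measurable_fst)
  refine (integrable_prod_iff hG.aestronglyMeasurable).2 ⟨ae_of_all _ fun z => ?_, ?_⟩
  · exact ((integrable_indicator_iff measurableSet_Ioi).2 (hf_int z)).mul_const (g z)
  refine hPg.mono' hG.norm.stronglyMeasurable.integral_prod_right'.aestronglyMeasurable
    (ae_of_all _ fun z => ?_)
  have hnorm : ∀ u,
      ‖(Ioi z).indicator f u * g z‖ = (Ioi z).indicator (fun u => |f u|) u * g z := fun u => by
      rw [norm_mul, norm_eq_abs, norm_eq_abs, abs_of_nonneg (hg_nonneg z)]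
      by_cases h : u ∈ Ioi z <;> simp [h]
  simp only [hnorm, integral_indicator_Ioi_mul]
  rw [norm_eq_abs, abs_of_nonneg (mul_nonneg (setIntegral_nonneg measurableSet_Ioi
    fun u _ => abs_nonneg _) (hg_nonneg z))]
  exact mul_le_mul_of_nonneg_right (hP z) (hg_nonneg z)

theorem integrable_integral_Ioi_mul
    (hG : Integrable (fun p : ℝ × ℝ => (Ioi p.1).indicator f p.2 * g p.1)
      (volume.prod volume)) :
    Integrable fun z => (∫ u in Ioi z, f u) * g z := by
  simpa only [integral_indicator_Ioi_mul] using hG.integral_prod_left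

theorem integral_integral_Ioi_mul
    (hG : Integrable (fun p : ℝ × ℝ => (Ioi p.1).indicator f p.2 * g p.1)
      (volume.prod volume)) :
    ∫ z, (∫ u in Ioi z, f u) * g z = ∫ u, f u * ∫ z in Iio u, g z := by
  have hswap := integral_integral_swap (f := fun z u => (Ioi z).indicator f u * g z) hG
  simp only [integral_indicator_Ioi_mul] at hswap
  rw [hswap]
  congr 1 with u
  rw [← integral_const_mul, ← integral_indicator measurableSet_Iio]
  congr 1 with z
  by_cases h : z < u <;> simp [indicator, h, mul_comm]

end Fubini

theorem airy_kernel_representation_general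
    (w : ℝ → ℝ) (hw_diff : Differentiable ℝ w)
    (hw_pos : ∀ x, 0 < deriv w x)
    (hw_bot : Filter.Tendsto w Filter.atBot (nhds 0))
    (hw_decay : ∃ ω > (0:ℝ), ∃ x₀ > (0:ℝ), ∀ x : ℝ, x₀ ≤ |x| → deriv w x ≤ Real.exp (-ω * |x|))
    (t : ℝ) (n : ℕ) (hn : 1 ≤ n) :
    ∀ x ∈ Set.Ioi (0:ℝ), ∀ y ∈ Set.Ioi (0:ℝ),
      (∀ z : ℝ, IntegrableOn (fun s : ℝ => Ain n (x+z+s+t) * Ain n (z+y+s+t)) (Set.Ioi 0))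
      ∧ Integrable (fun z : ℝ =>
          (∫ s in Set.Ioi (0:ℝ), Ain n (x+z+s+t) * Ain n (z+y+s+t)) * deriv w z)
      ∧ Kker w t n x y
          = ∫ z : ℝ, (∫ s in Set.Ioi (0:ℝ), Ain n (x+z+s+t) * Ain n (z+y+s+t)) * deriv w z := by
  intro x _ y _
  obtain ⟨ω, hω, x₀, -, hdecay⟩ := hw_decay
  set P : ℝ → ℝ := fun u => Ain n (x + t + u) * Ain n (y + t + u)
  have hP_meas : Measurable P := Airy.measurable_Ain_add_mul_Ain_add hn (x + t) (y + t)
  have hP_bound := Airy.abs_Ain_add_mul_Ain_add_le hn (x + t) (y + t)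
  have hP_tail := Airy.integrableOn_Ioi_Ain_add_mul_Ain_add hn (x + t) (y + t)
  have hP_int := integrableOn_Ioi_of_abs_le_pow hP_meas hP_bound hP_tail
  obtain ⟨C, hC⟩ := exists_integral_Ioi_abs_le hP_meas hP_bound hP_tail
  have hw'_nonneg : ∀ z, 0 ≤ deriv w z := fun z => (hw_pos z).le
  have hweight : Integrable fun z => C * (1 + |z|) ^ (2 + 1) * deriv w z := by
    simpa only [mul_assoc] using
      (integrable_one_add_abs_pow_mul_deriv hw_diff hw'_nonneg hω hdecay 3).const_mul C
  have hw_int : Integrable (deriv w) := by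
    simpa using integrable_one_add_abs_pow_mul_deriv hw_diff hw'_nonneg hω hdecay 0
  have hfubini := integrable_indicator_Ioi_fst_mul hP_meas (measurable_deriv w) hw'_nonneg hP_int
    hC hweight
  have hshift : ∀ z s, Ain n (x + z + s + t) * Ain n (z + y + s + t) = P (z + s) := fun z s => by
    simp only [P]; ring_nf
  have hinner : ∀ z, ∫ s in Ioi 0, Ain n (x + z + s + t) * Ain n (z + y + s + t)
      = ∫ u in Ioi z, P u := fun z => by
    simp only [hshift]; exact integral_Ioi_zero_comp_add P z
  refine ⟨fun z => ?_, ?_, ?_⟩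
  · simp only [hshift]; exact integrableOn_Ioi_zero_comp_add (hP_int z)
  · simp only [hinner]
    exact integrable_integral_Ioi_mul hfubini
  · simp only [hinner, integral_integral_Ioi_mul hfubini, integral_Iio_deriv hw_diff hw_int hw_bot]
    unfold Kker
    congr 1 with u
    simp only [P]; ring_nf

/-- for `x, y ∈ (0, ∞)` the kernel admits the representation
`K_{t,n}(x,y) = ∫_ℝ ( ∫_0^∞ Ai_n(x+z+s+t)·Ai_n(z+y+s+t) ds )·w'(z) dz`, with the inner
integral absolutely convergent for each `z` and the outer integral absolutely convergent. -/
theorem airy_kernel_representation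
    (w : ℝ → ℝ) (hw_diff : Differentiable ℝ w)
    (hw_pos : ∀ x, 0 < deriv w x)
    (hw_top : Filter.Tendsto w Filter.atTop (nhds 1))
    (hw_bot : Filter.Tendsto w Filter.atBot (nhds 0))
    (hw_decay : ∃ ω > (0:ℝ), ∃ x₀ > (0:ℝ), ∀ x : ℝ, x₀ ≤ |x| → deriv w x ≤ Real.exp (-ω * |x|))
    (t : ℝ) (n : ℕ) (hn : 1 ≤ n) :
    ∀ x ∈ Set.Ioi (0:ℝ), ∀ y ∈ Set.Ioi (0:ℝ),
      (∀ z : ℝ, IntegrableOn (fun s : ℝ => Ain n (x+z+s+t) * Ain n (z+y+s+t)) (Set.Ioi 0))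
      ∧ Integrable (fun z : ℝ =>
          (∫ s in Set.Ioi (0:ℝ), Ain n (x+z+s+t) * Ain n (z+y+s+t)) * deriv w z)
      ∧ Kker w t n x y
          = ∫ z : ℝ, (∫ s in Set.Ioi (0:ℝ), Ain n (x+z+s+t) * Ain n (z+y+s+t)) * deriv w z :=
  airy_kernel_representation_general w hw_diff hw_pos hw_bot hw_decay t n hn
end
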